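/- arXiv:2102.06409 — 5 statements merged into one kernel-verified Lean document; each statement's English description precedes it below -/
import Mathlib

section
/- For an element a and an idempotent e of a monoid M, we have a R* e if and only if ea = a and for all x, y ∈ M, xa = ya implies xe = ye. -/
theorem IsIdempotentElem.mul_eq_of_forall_mul_eq_imp {M : Type*} [Monoid M] {a e : M}
    (he : IsIdempotentElem e) (h : ∀ x y : M, x * e = y * e → x * a = y * a) :
    e * a = a := by
  simpa using h e 1 (by rw [he.eq, one_mul])

theorem mul_eq_mul_of_mul_eq_mul_of_mul_eq {M : Type*} [Monoid M] {a e x y : M}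
    (hea : e * a = a) (hxy : x * e = y * e) : x * a = y * a := by
  rw [← hea, ← mul_assoc, hxy, mul_assoc]

theorem rstar_idempotent_characterization (M : Type*) [Monoid M] (a e : M)
    (he : e * e = e) :
    (∀ x y : M, x * a = y * a ↔ x * e = y * e) ↔
    (e * a = a ∧ ∀ x y : M, x * a = y * a → x * e = y * e) := by
  constructor
  · intro h
    exact ⟨IsIdempotentElem.mul_eq_of_forall_mul_eq_imp he fun x y => (h x y).mpr,
      fun x y => (h x y).mp⟩
  · rintro ⟨hea, h⟩ x y
    exact ⟨h x y, mul_eq_mul_of_mul_eq_mul_of_mul_eq hea⟩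
end

section
/- For an element a and an idempotent e of a monoid M, we have a R̃ e if and only if ea = a and for every idempotent f ∈ M, fa = a implies fe = e. -/
theorem mul_eq_of_mul_eq_of_mul_eq {S : Type*} [Semigroup S] {a e f : S}
    (hea : e * a = a) (hfe : f * e = e) : f * a = a := by
  rw [← hea, ← mul_assoc, hfe]

theorem rtilde_idempotent_characterization (M : Type*) [Monoid M] (a e : M)
    (he : e * e = e) :
    (∀ f : M, f * f = f → (f * a = a ↔ f * e = e)) ↔
    (e * a = a ∧ ∀ f : M, f * f = f → f * a = a → f * e = e) := by
  constructor
  · intro h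
    exact ⟨(h e he).mpr he, fun f hf => (h f hf).mp⟩
  · rintro ⟨hea, h⟩ f hf
    exact ⟨h f hf, mul_eq_of_mul_eq_of_mul_eq hea⟩
end

section
/- If M is a left abundant monoid then the relations R* and R̃ coincide on M. -/
/-!
Both relations are tested by left multiplication, and `x = e`, `y = 1` turns the defining
equivalence of `R*` into that of `R̃`. Conversely, if `a R* e` with `e` idempotent then `e` is a
left identity for `a`; so when `a R̃ b` it is one for `b` too, and `x * a = y * a` gives
`x * e = y * e`, hence `x * b = y * b`. Symmetrically with an idempotent `f` for `b`.
-/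

section

variable {M : Type*} [Monoid M]

def RStar (a b : M) : Prop := ∀ x y : M, x * a = y * a ↔ x * b = y * b

def RTilde (a b : M) : Prop := ∀ e : M, IsIdempotentElem e → (e * a = a ↔ e * b = b)

theorem RStar.mul_left_eq_self_iff {a b : M} (h : RStar a b) (e : M) :
    e * a = a ↔ e * b = b := by
  simpa only [one_mul] using h e 1

theorem RStar.rtilde {a b : M} (h : RStar a b) : RTilde a b :=
  fun e _ => h.mul_left_eq_self_iff e

theorem RStar.mul_left_eq_self_of_isIdempotentElem {a e : M} (h : RStar a e)
    (he : IsIdempotentElem e) : e * a = a :=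
  (h.mul_left_eq_self_iff e).mpr he

theorem RStar.mul_eq_mul_of_mul_left_eq_self {a b e : M} (hae : RStar a e) (heb : e * b = b)
    {x y : M} (hxy : x * a = y * a) : x * b = y * b := by
  have hxe : x * e = y * e := (hae x y).mp hxy
  rw [← heb, ← mul_assoc, hxe, mul_assoc]

theorem RTilde.rstar {a b e f : M} (h : RTilde a b) (hae : RStar a e) (he : IsIdempotentElem e)
    (hbf : RStar b f) (hf : IsIdempotentElem f) : RStar a b := by
  have heb : e * b = b := (h e he).mp (hae.mul_left_eq_self_of_isIdempotentElem he)
  have hfa : f * a = a := (h f hf).mpr (hbf.mul_left_eq_self_of_isIdempotentElem hf)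
  exact fun x y => ⟨hae.mul_eq_mul_of_mul_left_eq_self heb, hbf.mul_eq_mul_of_mul_left_eq_self hfa⟩

end

theorem left_abundant_rstar_eq_rtilde (M : Type*) [Monoid M]
    (hla : ∀ a : M, ∃ e : M, e * e = e ∧ (∀ x y : M, x * a = y * a ↔ x * e = y * e)) :
    ∀ a b : M,
      (∀ x y : M, x * a = y * a ↔ x * b = y * b) ↔
      (∀ e : M, e * e = e → (e * a = a ↔ e * b = b)) := by
  intro a b
  show RStar a b ↔ RTilde a b
  refine ⟨RStar.rtilde, fun h => ?_⟩
  obtain ⟨e, he, hae⟩ := hla a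
  obtain ⟨f, hf, hbf⟩ := hla b
  exact h.rstar hae he hbf hf
end

section
/- The restricted direct product (direct sum) Σ_{α∈V} M_α of a family of left abundant monoids {M_α : α ∈ V} is left abundant, where Σ_{α∈V} M_α consists of those elements of the full direct product Π_{α∈V} M_α having all but finitely many coordinates equal to the identity. -/
/-- The restricted direct product (direct sum) of a family of monoids:
the submonoid of the full direct product consisting of the finitely
supported functions. -/
def restrictedDirectProduct (V : Type*) (M : V → Type*) [∀ α, Monoid (M α)] :
    Submonoid (∀ α, M α) where
  carrier := {f | {α | f α ≠ 1}.Finite}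
  one_mem' := by simp
  mul_mem' := by
    intro f g hf hg
    refine (hf.union hg).subset fun α hα => ?_
    by_contra hc
    simp only [Set.mem_union, Set.mem_setOf_eq, not_or, ne_eq, not_not] at hc
    simp only [Set.mem_setOf_eq, Pi.mul_apply, hc.1, hc.2, one_mul,
      ne_eq, not_true_eq_false] at hα

/-! Choose an idempotent `R*`-related to each coordinate of `a`, taking `1` wherever the coordinate
is `1`. The resulting family is then finitely supported, and `R*` is checked coordinatewise. -/

/-- The relation `R*` of the theory of abundant monoids. -/
def RStarRel {M : Type*} [Mul M] (a b : M) : Prop :=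
  ∀ x y : M, x * a = y * a ↔ x * b = y * b

theorem RStarRel.refl {M : Type*} [Mul M] (a : M) : RStarRel a a :=
  fun _ _ => Iff.rfl

theorem RStarRel.pi {V : Type*} {M : V → Type*} [∀ α, Mul (M α)] {f g : ∀ α, M α}
    (h : ∀ α, RStarRel (f α) (g α)) : RStarRel f g := fun x y => by
  simp only [funext_iff, Pi.mul_apply]
  exact forall_congr' fun α => h α (x α) (y α)

theorem RStarRel.of_map {M N F : Type*} [Mul M] [Mul N] [FunLike F M N] [MulHomClass F M N]
    (φ : F) (hφ : Function.Injective φ) {a b : M} (h : RStarRel (φ a) (φ b)) :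
    RStarRel a b := fun x y => by
  simpa only [← hφ.eq_iff, map_mul] using h (φ x) (φ y)

theorem exists_isIdempotentElem_rStarRel_of_eq_one {M : Type*} [Monoid M]
    (hM : ∀ a : M, ∃ e : M, IsIdempotentElem e ∧ RStarRel a e) (a : M) :
    ∃ e : M, IsIdempotentElem e ∧ RStarRel a e ∧ (a = 1 → e = 1) := by
  by_cases ha : a = 1
  · subst ha
    exact ⟨1, IsIdempotentElem.one, RStarRel.refl 1, fun _ => rfl⟩
  · obtain ⟨e, he, hae⟩ := hM a
    exact ⟨e, he, hae, fun h => absurd h ha⟩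

theorem restricted_direct_product_left_abundant (V : Type*) (M : V → Type*)
    [∀ α, Monoid (M α)]
    (hla : ∀ α, ∀ a : M α, ∃ e : M α, e * e = e ∧
      (∀ x y : M α, x * a = y * a ↔ x * e = y * e)) :
    ∀ a : restrictedDirectProduct V M, ∃ e : restrictedDirectProduct V M,
      e * e = e ∧ (∀ x y : restrictedDirectProduct V M,
        x * a = y * a ↔ x * e = y * e) := by
  intro a
  choose e he_idem he_rel he_one using
    fun α => exists_isIdempotentElem_rStarRel_of_eq_one (hla α) (a.1 α)
  have he_mem : e ∈ restrictedDirectProduct V M :=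
    a.2.subset fun α => mt (he_one α)
  exact ⟨⟨e, he_mem⟩, Subtype.ext (funext he_idem),
    RStarRel.of_map (restrictedDirectProduct V M).subtype Subtype.val_injective
      (RStarRel.pi he_rel)⟩
end

section
/- Let M, N be monoids each containing an element with no left inverse and no right inverse. Then the free product M * N is not regular: the element represented by m ∘ n, for m ∈ M and n ∈ N without one-sided inverses, is not regular in M * N. -/
/-!
Let `M ∗ N` act on reduced words (alternating lists of nontrivial letters), a letter being
multiplied into the first letter of the word when it comes from the same factor. Since `m` has
no left inverse, `1 ∉ M m`, so the words ending in a letter of `M m` followed by `n` form an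
invariant set: that last `M`-letter can be multiplied on the left but never cancels. If
`x = m n` satisfied `x w x = x`, then `s = w x • []` would be such a word, of length at least
`2`. As `n` has no right inverse, `n` merges into `s` without cancelling, so `x • s` is longer
than `s`, whereas `x • s = x • [] = [m, n]` has length `2`.
-/

def Function.End.ofEquivProd {M X Y : Type*} [Monoid M] (e : X ≃ M × Y) :
    M →* Function.End X where
  toFun a x := e.symm (a * (e x).1, (e x).2)
  map_one' := funext fun x => by simp only [one_mul, Prod.mk.eta, Equiv.symm_apply_apply]; rfl
  map_mul' a b := funext fun x => by
    change _ = e.symm (a * (e (e.symm _)).1, (e (e.symm _)).2)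
    simp [mul_assoc]

theorem Function.End.ofEquivProd_apply_symm {M X Y : Type*} [Monoid M] (e : X ≃ M × Y) (a : M)
    (p : M × Y) : Function.End.ofEquivProd e a (e.symm p) = e.symm (a * p.1, p.2) := by
  change e.symm (a * (e (e.symm p)).1, (e (e.symm p)).2) = _
  rw [Equiv.apply_symm_apply]

namespace Monoid.Coprod

variable {M N : Type*} [Monoid M] [Monoid N]

def IsReducedWord (l : List (M ⊕ N)) : Prop :=
  l.IsChain (fun u v => u.isLeft ≠ v.isLeft) ∧ Sum.inl 1 ∉ l ∧ Sum.inr 1 ∉ l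

theorem isReducedWord_map_swap {l : List (M ⊕ N)} :
    IsReducedWord (l.map Sum.swap) ↔ IsReducedWord l := by
  have hrel : ∀ u v : M ⊕ N, u.isRight ≠ v.isRight ↔ u.isLeft ≠ v.isLeft := by
    rintro (_ | _) (_ | _) <;> simp
  simp [IsReducedWord, List.isChain_map, hrel, and_comm]

theorem isReducedWord_cons_inl {x : M} {l : List (M ⊕ N)} :
    IsReducedWord (.inl x :: l) ↔ x ≠ 1 ∧ IsReducedWord l ∧ ∀ u ∈ l.head?, u.isRight := by
  have hrel : ∀ u : M ⊕ N, (Sum.inl x : M ⊕ N).isLeft ≠ u.isLeft ↔ u.isRight := by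
    rintro (_ | _) <;> simp
  simp only [IsReducedWord, List.isChain_cons, hrel, List.mem_cons, Sum.inl.injEq, reduceCtorEq,
    false_or, not_or]
  tauto

variable (M N) in
def ReducedWord : Type _ := {l : List (M ⊕ N) // IsReducedWord l}

namespace ReducedWord

variable (M N) in
def swap : ReducedWord M N ≃ ReducedWord N M where
  toFun w := ⟨w.1.map Sum.swap, isReducedWord_map_swap.2 w.2⟩
  invFun w := ⟨w.1.map Sum.swap, isReducedWord_map_swap.2 w.2⟩
  left_inv w := Subtype.ext (by simp)
  right_inv w := Subtype.ext (by simp)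

variable (M N) in
def HeadNotLeft : Type _ := {w : ReducedWord M N // ∀ u ∈ w.1.head?, u.isRight}

open Classical in
noncomputable def consLeft (x : M) (t : HeadNotLeft M N) : ReducedWord M N :=
  if hx : x = 1 then t.1 else ⟨.inl x :: t.1.1, isReducedWord_cons_inl.2 ⟨hx, t.1.2, t.2⟩⟩

open Classical in
theorem val_consLeft (x : M) (t : HeadNotLeft M N) :
    (consLeft x t).1 = if x = 1 then t.1.1 else .inl x :: t.1.1 := by
  by_cases hx : x = 1 <;> simp [consLeft, hx]

theorem consLeft_bijective :
    Function.Bijective (fun p : M × HeadNotLeft M N => consLeft p.1 p.2) := by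
  constructor
  · rintro ⟨x, t⟩ ⟨y, s⟩ h
    have hv := congrArg Subtype.val h
    have hts : t.1.1 = s.1.1 → t = s := fun h => Subtype.ext (Subtype.ext h)
    by_cases hx : x = 1 <;> by_cases hy : y = 1 <;> simp [consLeft, hx, hy] at hv
    · simp [hx, hy, hts hv]
    · simpa [hv] using t.2
    · simpa [← hv] using s.2
    · simp [hv.1, hts hv.2]
  · rintro ⟨l, hl⟩
    match l, hl with
    | .inl x :: t, hl =>
      obtain ⟨hx, ht, hhead⟩ := isReducedWord_cons_inl.1 hl
      exact ⟨(x, ⟨⟨t, ht⟩, hhead⟩), Subtype.ext (by simp [consLeft, hx])⟩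
    | [], hl => exact ⟨(1, ⟨⟨[], hl⟩, by simp⟩), Subtype.ext (by simp [consLeft])⟩
    | .inr y :: t, hl => exact ⟨(1, ⟨⟨.inr y :: t, hl⟩, by simp⟩), Subtype.ext (by simp [consLeft])⟩

/- Every reduced word is uniquely `consLeft x t`, and `M` acts by left multiplication on `x`:
the action laws then hold without any case analysis on cancellations. -/
variable (M N) in
noncomputable def decompose : M × HeadNotLeft M N ≃ ReducedWord M N :=
  .ofBijective _ consLeft_bijective

noncomputable def leftAct : M →* Function.End (ReducedWord M N) :=
  Function.End.ofEquivProd (decompose M N).symm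

theorem leftAct_consLeft (a x : M) (t : HeadNotLeft M N) :
    leftAct a (consLeft x t) = consLeft (a * x) t :=
  Function.End.ofEquivProd_apply_symm (decompose M N).symm a (x, t)

open Classical in
noncomputable def mergeLeft (a : M) : List (M ⊕ N) → List (M ⊕ N)
  | .inl x :: t => if a * x = 1 then t else .inl (a * x) :: t
  | l => if a = 1 then l else .inl a :: l

open Classical in
noncomputable def mergeRight (b : N) : List (M ⊕ N) → List (M ⊕ N)
  | .inr y :: t => if b * y = 1 then t else .inr (b * y) :: t
  | l => if b = 1 then l else .inr b :: l

omit [Monoid M] in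
theorem map_swap_mergeLeft_map_swap (b : N) (l : List (M ⊕ N)) :
    (mergeLeft b (l.map Sum.swap)).map Sum.swap = mergeRight b l := by
  rcases l with _ | ⟨_ | y, t⟩ <;> simp [mergeLeft, mergeRight, apply_ite]

omit [Monoid M] in
theorem length_le_length_mergeRight {b : N} (hb : ∀ y, b * y ≠ 1) (l : List (M ⊕ N)) :
    l.length ≤ (mergeRight b l).length := by
  have hb1 : b ≠ 1 := by simpa using hb 1
  rcases l with _ | ⟨x | y, t⟩ <;> simp [mergeRight, hb1, hb]

theorem leftAct_val (a : M) (w : ReducedWord M N) : (leftAct a w).1 = mergeLeft a w.1 := by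
  obtain ⟨⟨x, ⟨⟨l, hl⟩, hhead⟩⟩, rfl⟩ := consLeft_bijective.2 w
  rw [leftAct_consLeft, val_consLeft, val_consLeft]
  by_cases hx : x = 1
  · rw [hx, mul_one]
    rcases l with _ | ⟨_ | y, t⟩
    · simp [mergeLeft]
    · simp at hhead
    · simp [mergeLeft]
  · simp [mergeLeft, hx]

noncomputable def rightAct : N →* Function.End (ReducedWord M N) :=
  Function.End.ofEquivProd ((swap M N).trans (decompose N M).symm)

theorem rightAct_val (b : N) (w : ReducedWord M N) : (rightAct b w).1 = mergeRight b w.1 := by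
  change (leftAct b (swap M N w)).1.map Sum.swap = _
  rw [leftAct_val]
  exact map_swap_mergeLeft_map_swap b w.1

def empty : ReducedWord M N := ⟨[], by simp [IsReducedWord]⟩

noncomputable def act : Monoid.Coprod M N →* Function.End (ReducedWord M N) :=
  lift leftAct rightAct

theorem act_inl_val (a : M) (w : ReducedWord M N) : (act (inl a) w).1 = mergeLeft a w.1 := by
  rw [act, lift_apply_inl, leftAct_val]

theorem act_inr_val (b : N) (w : ReducedWord M N) : (act (inr b) w).1 = mergeRight b w.1 := by
  rw [act, lift_apply_inr, rightAct_val]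

theorem act_inl_mul_inr_val {a : M} {b : N} (ha : a ≠ 1) (hb : ∀ y, b * y ≠ 1)
    (w : ReducedWord M N) : (act (inl a * inr b) w).1 = .inl a :: mergeRight b w.1 := by
  change (act (inl a) (act (inr b) w)).1 = _
  rw [act_inl_val, act_inr_val]
  have hb1 : b ≠ 1 := by simpa using hb 1
  rcases w.1 with _ | ⟨x | y, t⟩ <;> simp [mergeRight, mergeLeft, ha, hb1, hb]

def EndsWith (m : M) (n : N) (l : List (M ⊕ N)) : Prop :=
  ∃ (t : List (M ⊕ N)) (c : M), l = t ++ [.inl (c * m), .inr n]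

omit [Monoid N] in
theorem endsWith_mergeLeft {m : M} {n : N} (hm : ∀ b, b * m ≠ 1) (a : M) {l : List (M ⊕ N)}
    (h : EndsWith m n l) : EndsWith m n (mergeLeft a l) := by
  obtain ⟨t, c, rfl⟩ := h
  rcases t with _ | ⟨x | y, t⟩
  · have hacm : a * (c * m) ≠ 1 := by simpa [mul_assoc] using hm (a * c)
    exact ⟨[], a * c, by simp [mergeLeft, hacm, mul_assoc]⟩
  · by_cases hax : a * x = 1
    · exact ⟨t, c, by simp [mergeLeft, hax]⟩
    · exact ⟨.inl (a * x) :: t, c, by simp [mergeLeft, hax]⟩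
  · by_cases ha : a = 1
    · exact ⟨.inr y :: t, c, by simp [mergeLeft, ha]⟩
    · exact ⟨.inl a :: .inr y :: t, c, by simp [mergeLeft, ha]⟩

theorem endsWith_mergeRight {m : M} {n : N} (b : N) {l : List (M ⊕ N)}
    (h : EndsWith m n l) : EndsWith m n (mergeRight b l) := by
  obtain ⟨t, c, rfl⟩ := h
  rcases t with _ | ⟨x | y, t⟩
  · by_cases hb : b = 1
    · exact ⟨[], c, by simp [mergeRight, hb]⟩
    · exact ⟨[.inr b], c, by simp [mergeRight, hb]⟩
  · by_cases hb : b = 1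
    · exact ⟨.inl x :: t, c, by simp [mergeRight, hb]⟩
    · exact ⟨.inr b :: .inl x :: t, c, by simp [mergeRight, hb]⟩
  · by_cases hby : b * y = 1
    · exact ⟨t, c, by simp [mergeRight, hby]⟩
    · exact ⟨.inr (b * y) :: t, c, by simp [mergeRight, hby]⟩

theorem endsWith_act {m : M} {n : N} (hm : ∀ b, b * m ≠ 1) (x : Monoid.Coprod M N)
    {w : ReducedWord M N} (h : EndsWith m n w.1) : EndsWith m n (act x w).1 := by
  induction x using Monoid.Coprod.induction_on generalizing w with
  | inl a => rw [act_inl_val]; exact endsWith_mergeLeft hm a h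
  | inr b => rw [act_inr_val]; exact endsWith_mergeRight b h
  | mul x y hx hy => rw [map_mul]; exact hx (hy h)

end ReducedWord
end Monoid.Coprod

open Monoid.Coprod ReducedWord in
theorem free_product_not_regular (M N : Type*) [Monoid M] [Monoid N]
    (m : M) (n : N)
    (hm : (¬∃ b : M, b * m = 1) ∧ (¬∃ b : M, m * b = 1))
    (hn : (¬∃ b : N, b * n = 1) ∧ (¬∃ b : N, n * b = 1)) :
    ¬∃ w : Monoid.Coprod M N,
      (Monoid.Coprod.inl m * Monoid.Coprod.inr n) * w *
        (Monoid.Coprod.inl m * Monoid.Coprod.inr n) =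
      Monoid.Coprod.inl m * Monoid.Coprod.inr n := by
  rintro ⟨w, hw⟩
  have hm_left : ∀ b, b * m ≠ 1 := fun b h => hm.1 ⟨b, h⟩
  have hn_right : ∀ b, n * b ≠ 1 := fun b h => hn.2 ⟨b, h⟩
  have hm1 : m ≠ 1 := by simpa using hm_left 1
  have hn1 : n ≠ 1 := by simpa using hn_right 1
  set x : Monoid.Coprod M N := inl m * inr n
  have act_x := act_inl_mul_inr_val hm1 hn_right
  have hxe : (act x empty).1 = [.inl m, .inr n] := by
    rw [act_x]
    simp [empty, mergeRight, hn1]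
  set s := act w (act x empty)
  have hs : EndsWith m n s.1 := endsWith_act hm_left w ⟨[], 1, by simp [hxe]⟩
  have hxs : act x s = act x empty := by
    change (act x * act w * act x) empty = _
    rw [← map_mul, ← map_mul, hw]
  obtain ⟨t, c, hst⟩ := hs
  have hs_len : 2 ≤ s.1.length := by simp [hst]
  have hxs_len : (act x s).1.length = 2 := by rw [hxs, hxe]; rfl
  rw [act_x, List.length_cons] at hxs_len
  have := length_le_length_mergeRight hn_right s.1
  omega
end
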